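/- arXiv:2212.12036 — 3 statements merged into one kernel-verified Lean document; each statement's English description precedes it below -/
import Mathlib

section
/- Let M ∈ ℝ^{m×n}, Ω SPD, G = -Mᵀ, L = M Ω⁻¹ G, and let L̄⁻¹ ∈ ℝ^{m×m} satisfy L L̄⁻¹ z = z for all z ∈ range(L) and yᵀ L̄⁻ᵀ z = yᵀ L̄⁻¹ z for all y, z ∈ range(M). Define V_inhom(y) = Ω⁻¹ G L̄⁻¹ y for y ∈ range(M). Then ½‖V_inhom(y)‖²_Ω = -½ yᵀ L̄⁻¹ y. -/
/-!
Put `w = L̄⁻¹ y`. Then `Ω V = G w = -Mᵀ w`, so `Vᵀ Ω V = -(M V) ⬝ w = -(L w) ⬝ w`, and `L w = y`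
because `y ∈ range M = range (M Ω⁻¹ Mᵀ) = range L`: positivity of `Ω⁻¹` gives
`ker (M Ω⁻¹ Mᵀ) = ker Mᵀ`, hence equal ranks.
-/

open scoped Matrix

namespace Matrix

variable {m n R : Type*} [Fintype n]

theorem mulVecLin_neg [CommRing R] (A : Matrix m n R) : (-A).mulVecLin = -A.mulVecLin :=
  LinearMap.ext fun x ↦ neg_mulVec x A

variable [Fintype m]

theorem star_dotProduct_mul_mul_conjTranspose_mulVec [CommSemiring R] [StarRing R]
    (M : Matrix m n R) (P : Matrix n n R) (x : m → R) :
    star x ⬝ᵥ (M * P * Mᴴ) *ᵥ x = star (Mᴴ *ᵥ x) ⬝ᵥ P *ᵥ (Mᴴ *ᵥ x) := by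
  rw [← mulVec_mulVec, ← mulVec_mulVec, dotProduct_mulVec, star_mulVec,
    conjTranspose_conjTranspose]

theorem ker_mulVecLin_mul_mul_conjTranspose [CommRing R] [PartialOrder R] [StarRing R]
    {P : Matrix n n R} (hP : P.PosDef) (M : Matrix m n R) :
    LinearMap.ker (M * P * Mᴴ).mulVecLin = LinearMap.ker Mᴴ.mulVecLin := by
  ext x
  simp only [LinearMap.mem_ker, mulVecLin_apply]
  refine ⟨fun h ↦ ?_, fun h ↦ by rw [← mulVec_mulVec, h, mulVec_zero]⟩
  by_contra hne
  have hpos := hP.dotProduct_mulVec_pos hne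
  rw [← star_dotProduct_mul_mul_conjTranspose_mulVec, h, dotProduct_zero] at hpos
  exact hpos.false

theorem range_mulVecLin_mul_mul_conjTranspose
    [Field R] [PartialOrder R] [StarRing R] [StarOrderedRing R]
    {P : Matrix n n R} (hP : P.PosDef) (M : Matrix m n R) :
    LinearMap.range (M * P * Mᴴ).mulVecLin = LinearMap.range M.mulVecLin := by
  refine Submodule.eq_of_le_of_finrank_eq ?_ ?_
  · rw [Matrix.mul_assoc, mulVecLin_mul]
    exact LinearMap.range_comp_le_range _ _
  · have hMPM := LinearMap.finrank_range_add_finrank_ker (M * P * Mᴴ).mulVecLin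
    have hMH := LinearMap.finrank_range_add_finrank_ker Mᴴ.mulVecLin
    have hrank : Mᴴ.rank = M.rank := rank_conjTranspose M
    rw [ker_mulVecLin_mul_mul_conjTranspose hP] at hMPM
    unfold rank at hrank
    omega

end Matrix

theorem lifting_energy_identity_general
    {m n : ℕ} (M : Matrix (Fin m) (Fin n) ℝ) (Ω : Matrix (Fin n) (Fin n) ℝ)
    (hΩ : Ω.PosDef)
    (G : Matrix (Fin n) (Fin m) ℝ) (hG : G = -Mᵀ)
    (L : Matrix (Fin m) (Fin m) ℝ) (hL : L = M * Ω⁻¹ * G)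
    (Li : Matrix (Fin m) (Fin m) ℝ)
    (hLi : ∀ z : Fin m → ℝ, (∃ x, L.mulVec x = z) → L.mulVec (Li.mulVec z) = z)
    (y : Fin m → ℝ) (hy : ∃ x, M.mulVec x = y)
    (Vinhom : Fin n → ℝ) (hV : Vinhom = (Ω⁻¹ * G * Li).mulVec y) :
    (1/2) * (Vinhom ⬝ᵥ Ω.mulVec Vinhom) = -((1/2) * (y ⬝ᵥ Li.mulVec y)) := by
  have hrange : LinearMap.range L.mulVecLin = LinearMap.range M.mulVecLin := by
    rw [hL, hG, Matrix.mul_neg, Matrix.mulVecLin_neg, LinearMap.range_neg,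
      ← Matrix.conjTranspose_eq_transpose_of_trivial,
      Matrix.range_mulVecLin_mul_mul_conjTranspose hΩ.inv]
  have hMV : M *ᵥ Vinhom = y := by
    rw [hV, ← Matrix.mulVec_mulVec, Matrix.mulVec_mulVec, ← Matrix.mul_assoc, ← hL]
    exact hLi y (show y ∈ LinearMap.range L.mulVecLin from hrange ▸ hy)
  have hΩV : Ω *ᵥ Vinhom = G *ᵥ (Li *ᵥ y) := by
    have hdet : IsUnit Ω.det := (Matrix.isUnit_iff_isUnit_det Ω).mp hΩ.isUnit
    rw [hV, Matrix.mulVec_mulVec, Matrix.mul_assoc,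
      Matrix.mul_nonsing_inv_cancel_left Ω _ hdet, Matrix.mulVec_mulVec]
  have henergy : Vinhom ⬝ᵥ Ω *ᵥ Vinhom = -(y ⬝ᵥ Li *ᵥ y) := by
    rw [hΩV, hG, Matrix.neg_mulVec, dotProduct_neg, Matrix.dotProduct_mulVec,
      Matrix.vecMul_transpose, hMV]
  rw [henergy]
  ring

/-- Lifting-function energy identity: with `V_inhom(y) = Ω⁻¹ G L̄⁻¹ y`,
`½‖V_inhom(y)‖²_Ω = -½ yᵀ L̄⁻¹ y` for `y ∈ range M`. -/
theorem lifting_energy_identity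
    {m n : ℕ} (M : Matrix (Fin m) (Fin n) ℝ) (Ω : Matrix (Fin n) (Fin n) ℝ)
    (hΩ : Ω.PosDef)
    (G : Matrix (Fin n) (Fin m) ℝ) (hG : G = -Mᵀ)
    (L : Matrix (Fin m) (Fin m) ℝ) (hL : L = M * Ω⁻¹ * G)
    (Li : Matrix (Fin m) (Fin m) ℝ)
    (hLi : ∀ z : Fin m → ℝ, (∃ x, L.mulVec x = z) → L.mulVec (Li.mulVec z) = z)
    (hLisym : ∀ y z : Fin m → ℝ, (∃ x, M.mulVec x = y) → (∃ x, M.mulVec x = z) →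
      y ⬝ᵥ Liᵀ.mulVec z = y ⬝ᵥ Li.mulVec z)
    (y : Fin m → ℝ) (hy : ∃ x, M.mulVec x = y)
    (Vinhom : Fin n → ℝ) (hV : Vinhom = (Ω⁻¹ * G * Li).mulVec y) :
    (1/2) * (Vinhom ⬝ᵥ Ω.mulVec Vinhom) = -((1/2) * (y ⬝ᵥ Li.mulVec y)) :=
  lifting_energy_identity_general M Ω hΩ G hG L hL Li hLi y hy Vinhom hV
end

section
/- Under the assumptions of the previous context (M, Ω, G = -Mᵀ, L, L̄⁻¹, V_inhom(y) = Ω⁻¹ G L̄⁻¹ y), for a differentiable curve y(t) with values in range(M), the derivative of the lifting energy satisfies d/dt ½‖V_inhom(y(t))‖²_Ω = -y(t)ᵀ L̄⁻¹ (d/dt y(t)). -/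
/-! On `range M` the lifting energy is a quadratic form in `y`: with `w = L̄⁻¹ y` one has
`‖Ω⁻¹ G w‖²_Ω = wᵀ Gᵀ Ω⁻¹ G w = -wᵀ L w = -yᵀ L̄⁻¹ y`, where `L w = y` because
`range M = range (M Ω⁻¹ Mᵀ) = range L` (`Ω⁻¹` is positive definite). Differentiating
`-½ yᵀ L̄⁻¹ y` gives `-½ (y'ᵀ L̄⁻¹ y + yᵀ L̄⁻¹ y')`, and the two terms agree by the symmetry of
`L̄⁻¹` on `range M`, which contains `y'` because it is a closed subspace containing the curve. -/

open scoped Matrix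
open Matrix Set

theorem HasDerivAt.mem_of_forall_mem {𝕜 F : Type*} [NontriviallyNormedField 𝕜]
    [NormedAddCommGroup F] [NormedSpace 𝕜 F] {S : Submodule 𝕜 F} (hS : IsClosed (S : Set F))
    {f : 𝕜 → F} {f' : F} {x : 𝕜} (hf : HasDerivAt f f' x) (hmem : ∀ s, f s ∈ S) : f' ∈ S := by
  have hspan : Submodule.span 𝕜 (f '' univ) ≤ S :=
    Submodule.span_le.mpr (by rintro - ⟨s, -, rfl⟩; exact hmem s)
  rw [← hf.deriv, ← SetLike.mem_coe, ← hS.closure_eq]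
  exact closure_mono hspan (range_deriv_subset_closure_span_image f dense_univ (mem_range_self x))

theorem HasDerivAt.dotProduct {𝕜 ι : Type*} [NontriviallyNormedField 𝕜] [Fintype ι]
    {u v : 𝕜 → ι → 𝕜} {u' v' : ι → 𝕜} {t : 𝕜}
    (hu : HasDerivAt u u' t) (hv : HasDerivAt v v' t) :
    HasDerivAt (fun s => u s ⬝ᵥ v s) (u' ⬝ᵥ v t + u t ⬝ᵥ v') t := by
  simp only [_root_.dotProduct, ← Finset.sum_add_distrib]
  exact HasDerivAt.fun_sum fun i _ => (hasDerivAt_pi.mp hu i).mul (hasDerivAt_pi.mp hv i)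

theorem HasDerivAt.const_mulVec {𝕜 ι κ : Type*} [NontriviallyNormedField 𝕜] [Fintype ι]
    (A : Matrix κ ι 𝕜) {y : 𝕜 → ι → 𝕜} {y' : ι → 𝕜} {t : 𝕜} (hy : HasDerivAt y y' t) :
    HasDerivAt (fun s => A *ᵥ y s) (A *ᵥ y') t :=
  hasDerivAt_pi.mpr fun i => by
    simpa only [mulVec, zero_dotProduct, zero_add] using (hasDerivAt_const t (A i)).dotProduct hy

theorem Matrix.ker_mulVecLin_mul_posDef_mul_transpose {m n : Type*} [Fintype m] [Fintype n]
    (A : Matrix m n ℝ) {P : Matrix n n ℝ} (hP : P.PosDef) :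
    LinearMap.ker (A * P * Aᵀ).mulVecLin = LinearMap.ker Aᵀ.mulVecLin := by
  ext w
  simp only [LinearMap.mem_ker, mulVecLin_apply]
  refine ⟨fun h => ?_, fun h => by rw [← mulVec_mulVec, h, mulVec_zero]⟩
  have hquad : Aᵀ *ᵥ w ⬝ᵥ P *ᵥ (Aᵀ *ᵥ w) = w ⬝ᵥ (A * P * Aᵀ) *ᵥ w := by
    rw [← mulVec_mulVec, ← mulVec_mulVec, dotProduct_mulVec w A, ← mulVec_transpose]
  rw [h, dotProduct_zero] at hquad
  by_contra hne
  have hpos := hP.dotProduct_mulVec_pos hne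
  rw [star_trivial, hquad] at hpos
  exact lt_irrefl 0 hpos

theorem Matrix.range_mulVecLin_mul_posDef_mul_transpose {m n : Type*} [Fintype m] [Fintype n]
    (A : Matrix m n ℝ) {P : Matrix n n ℝ} (hP : P.PosDef) :
    LinearMap.range (A * P * Aᵀ).mulVecLin = LinearMap.range A.mulVecLin := by
  have hle : LinearMap.range (A * P * Aᵀ).mulVecLin ≤ LinearMap.range A.mulVecLin := by
    rw [Matrix.mul_assoc, mulVecLin_mul]
    exact LinearMap.range_comp_le_range _ _
  refine Submodule.eq_of_le_of_finrank_eq hle ?_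
  have h₁ := LinearMap.finrank_range_add_finrank_ker (A * P * Aᵀ).mulVecLin
  have h₂ := LinearMap.finrank_range_add_finrank_ker Aᵀ.mulVecLin
  have h₃ : Aᵀ.rank = A.rank := rank_transpose A
  rw [ker_mulVecLin_mul_posDef_mul_transpose A hP] at h₁
  rw [rank, rank] at h₃
  omega

theorem dotProduct_mulVec_inv_mul_mul_mulVec_self {m n : Type*} [Fintype m] [Fintype n]
    [DecidableEq n] {M : Matrix m n ℝ} {Ω : Matrix n n ℝ} (hΩ : IsUnit Ω.det)
    {G : Matrix n m ℝ} (hG : G = -Mᵀ) {L Li : Matrix m m ℝ} (hL : L = M * Ω⁻¹ * G)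
    {z : m → ℝ} (hz : L *ᵥ Li *ᵥ z = z) :
    (Ω⁻¹ * G * Li) *ᵥ z ⬝ᵥ Ω *ᵥ ((Ω⁻¹ * G * Li) *ᵥ z) = -(z ⬝ᵥ Li *ᵥ z) := by
  set w := Li *ᵥ z
  calc (Ω⁻¹ * G * Li) *ᵥ z ⬝ᵥ Ω *ᵥ ((Ω⁻¹ * G * Li) *ᵥ z)
      = Ω⁻¹ *ᵥ (G *ᵥ w) ⬝ᵥ G *ᵥ w := by
        rw [← mulVec_mulVec, ← mulVec_mulVec, mulVec_mulVec _ Ω, mul_nonsing_inv _ hΩ,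
          one_mulVec]
    _ = -(w ⬝ᵥ L *ᵥ w) := by
        rw [← dotProduct_transpose_mulVec, hL, ← mulVec_mulVec, ← mulVec_mulVec, hG]
        simp only [transpose_neg, transpose_transpose, neg_mulVec, dotProduct_neg]
    _ = -(z ⬝ᵥ Li *ᵥ z) := by rw [hz, dotProduct_comm]

/-- Derivative of the lifting energy: for a differentiable curve `y(t)` in
`range M`, `d/dt ½‖V_inhom(y(t))‖²_Ω = -y(t)ᵀ L̄⁻¹ (dy/dt)`. -/
theorem lifting_energy_derivative
    {m n : ℕ} (M : Matrix (Fin m) (Fin n) ℝ) (Ω : Matrix (Fin n) (Fin n) ℝ)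
    (hΩ : Ω.PosDef)
    (G : Matrix (Fin n) (Fin m) ℝ) (hG : G = -Mᵀ)
    (L : Matrix (Fin m) (Fin m) ℝ) (hL : L = M * Ω⁻¹ * G)
    (Li : Matrix (Fin m) (Fin m) ℝ)
    (hLi : ∀ z : Fin m → ℝ, (∃ x, L.mulVec x = z) → L.mulVec (Li.mulVec z) = z)
    (hLisym : ∀ y z : Fin m → ℝ, (∃ x, M.mulVec x = y) → (∃ x, M.mulVec x = z) →
      y ⬝ᵥ Liᵀ.mulVec z = y ⬝ᵥ Li.mulVec z)
    (y y' : ℝ → Fin m → ℝ)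
    (hy : ∀ t, ∃ x, M.mulVec x = y t)
    (hy' : ∀ t, HasDerivAt y (y' t) t)
    (Vinhom : (Fin m → ℝ) → (Fin n → ℝ))
    (hV : ∀ z, Vinhom z = (Ω⁻¹ * G * Li).mulVec z) (t : ℝ) :
    HasDerivAt (fun s => (1/2) * (Vinhom (y s) ⬝ᵥ Ω.mulVec (Vinhom (y s))))
      (-(y t ⬝ᵥ Li.mulVec (y' t))) t := by
  have hLLi : ∀ z, (∃ x, M *ᵥ x = z) → L *ᵥ Li *ᵥ z = z := by
    rintro - ⟨x₀, rfl⟩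
    have hx₀ : M *ᵥ x₀ ∈ LinearMap.range (M * Ω⁻¹ * Mᵀ).mulVecLin := by
      rw [range_mulVecLin_mul_posDef_mul_transpose M hΩ.inv]
      exact LinearMap.mem_range_self _ x₀
    obtain ⟨x, hx⟩ := hx₀
    refine hLi _ ⟨-x, ?_⟩
    rw [hL, hG, Matrix.mul_neg, mulVec_neg, neg_mulVec, neg_neg]
    exact hx
  have hy't : ∃ x, M *ᵥ x = y' t :=
    (hy' t).mem_of_forall_mem (LinearMap.range M.mulVecLin).closed_of_finiteDimensional hy
  have henergy : (fun s => (1/2) * (Vinhom (y s) ⬝ᵥ Ω *ᵥ Vinhom (y s))) =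
      fun s => -(1/2) * (y s ⬝ᵥ Li *ᵥ y s) := funext fun s => by
    rw [hV, dotProduct_mulVec_inv_mul_mul_mulVec_self (isUnit_iff_ne_zero.mpr hΩ.det_pos.ne')
      hG hL (hLLi _ (hy s))]
    ring
  rw [henergy]
  refine (((hy' t).dotProduct ((hy' t).const_mulVec Li)).const_mul (-(1/2))).congr_deriv ?_
  rw [← dotProduct_transpose_mulVec, hLisym _ _ (hy t) hy't]
  ring
end

section
/- Equivalence of velocity-only and velocity-pressure ROM: Let M ∈ ℝ^{m×n}, Ω SPD, G = -Mᵀ. Let Φ_hom ∈ ℝ^{n×R_h} be Ω-orthonormal with MΦ_hom = 0, Φ_inhom ∈ ℝ^{n×R_i} Ω-orthonormal with Φ_homᵀΩΦ_inhom = 0 and rank(MΦ_inhom) = R_i, and set Φ = [Φ_hom Φ_inhom], Ψ = MΦ_inhom. Suppose a(t) ∈ ℝ^{R_h+R_i} and b(t) solve the velocity-pressure ROM: da/dt = Φᵀ F(Φa(t)) - Φᵀ G Ψ b(t) with Ψᵀ M Φ a(t) = Ψᵀ ỹ(t), and a_hom(t) solves the velocity-only ROM: d a_hom/dt = Φ_homᵀ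 F(Φ_hom a_hom(t) + Ṽ(t)), where Ṽ(t) is the unique vector in range(Φ_inhom) with M Ṽ(t) = ỹ(t), with matching initial conditions (a(0) = [a_hom(0); a₂(0)] with Φ_inhom a₂(0) = Ṽ(0)). Then Φ a(t) = Φ_hom a_hom(t) + Ṽ(t) for all t where both solutions exist. -/
open scoped Matrix NNReal Topology
open Set Filter

/-!
Since `M Φ_hom = 0`, the mass constraint only sees the inhomogeneous coefficients: it reads
`ΨᵀΨ a₂ = Ψᵀ ỹ = ΨᵀΨ c` where `Ṽ = Φ_inhom c`, and `ΨᵀΨ` is invertible because `Ψ` has full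
column rank. Hence `Φ_inhom a₂(t) = Ṽ(t)` at every time. The same identity `M Φ_hom = 0` says
that the pressure term `Φ_homᵀ G Ψ b` vanishes, so the homogeneous coefficients of the
velocity-pressure ROM solve the velocity-only ROM; uniqueness for that ODE, whose right-hand
side is locally Lipschitz in the state uniformly in time, identifies them with `a_hom`.
-/

def LocallyLipschitzUniformInTime {E : Type*} [PseudoEMetricSpace E] (v : ℝ → E → E) : Prop :=
  ∀ p : ℝ × E, ∃ K : ℝ≥0, ∃ U ∈ 𝓝 p, ∀ t, LipschitzOnWith K (v t) {x | (t, x) ∈ U}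

theorem LocallyLipschitz.locallyLipschitzUniformInTime_comp {E H K : Type*}
    [PseudoEMetricSpace E] [NormedAddCommGroup H] [PseudoEMetricSpace K] {F : H → K}
    (hF : LocallyLipschitz F) {A : K → E} {B : E → H} {KA KB : ℝ≥0} (hA : LipschitzWith KA A)
    (hB : LipschitzWith KB B) {V : ℝ → H} (hV : Continuous V) :
    LocallyLipschitzUniformInTime fun t x => A (F (B x + V t)) := by
  rintro ⟨t₀, x₀⟩
  obtain ⟨K, U, hU, hKU⟩ := hF (B x₀ + V t₀)
  refine ⟨KA * (K * KB), (fun p : ℝ × E => B p.2 + V p.1) ⁻¹' U, ?_, fun t => ?_⟩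
  · exact ((hB.continuous.comp continuous_snd).add (hV.comp continuous_fst)).continuousAt
      |>.preimage_mem_nhds hU
  · have hshift : LipschitzWith KB fun x => B x + V t := fun x y => by
      simpa only [edist_add_right] using hB x y
    exact hA.comp_lipschitzOnWith (hKU.comp hshift.lipschitzOnWith fun _ hx => hx)

theorem ODE_solution_unique_univ_of_locallyLipschitzUniformInTime
    {E : Type*} [NormedAddCommGroup E] [NormedSpace ℝ E] {v : ℝ → E → E}
    (hv : LocallyLipschitzUniformInTime v) {f g : ℝ → E} {t₀ : ℝ}
    (hf : ∀ t, HasDerivAt f (v t (f t)) t) (hg : ∀ t, HasDerivAt g (v t (g t)) t)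
    (heq : f t₀ = g t₀) : f = g := by
  have hcont : ∀ {h : ℝ → E}, (∀ t, HasDerivAt h (v t (h t)) t) → Continuous h :=
    fun hh => continuous_iff_continuousAt.2 fun t => (hh t).continuousAt
  have hclosed : IsClosed {t | f t = g t} := isClosed_eq (hcont hf) (hcont hg)
  have hopen : IsOpen {t | f t = g t} := by
    refine isOpen_iff_mem_nhds.2 fun t₁ (h₁ : f t₁ = g t₁) => ?_
    obtain ⟨K, U, hU, hK⟩ := hv (t₁, f t₁)
    have hgraph : ∀ {h : ℝ → E}, (∀ t, HasDerivAt h (v t (h t)) t) → h t₁ = f t₁ →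
        ∀ᶠ t in 𝓝 t₁, HasDerivAt h (v t (h t)) t ∧ (t, h t) ∈ U := fun {h} hh hh₁ => by
      have hgraph_mem : ∀ᶠ t in 𝓝 t₁, (t, h t) ∈ U :=
        ((continuous_id.prodMk (hcont hh)).tendsto t₁).eventually_mem (by rwa [id, hh₁])
      filter_upwards [hgraph_mem] with t ht using ⟨hh t, ht⟩
    exact ODE_solution_unique_of_eventually (Eventually.of_forall hK) (hgraph hf rfl)
      (hgraph hg h₁.symm) h₁
  ext1 t
  exact (IsClopen.eq_univ ⟨hclosed, hopen⟩ ⟨t₀, heq⟩).ge (mem_univ t)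

namespace Matrix

variable {m n k R : Type*} [Fintype n]

theorem lipschitzWith_mulVec [Fintype m] (A : Matrix m n ℝ) :
    LipschitzWith ‖(mulVecLin A).toContinuousLinearMap‖₊ (A *ᵥ ·) :=
  (mulVecLin A).toContinuousLinearMap.lipschitz

theorem mulVec_injective_of_rank_eq_card [Field R] (A : Matrix m n R)
    (h : A.rank = Fintype.card n) : Function.Injective A.mulVec := by
  have hker : Module.finrank R (LinearMap.ker A.mulVecLin) = 0 := by
    have := LinearMap.finrank_range_add_finrank_ker A.mulVecLin
    rw [← rank, h, Module.finrank_fintype_fun_eq_card] at this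
    omega
  exact LinearMap.ker_eq_bot.1 (Submodule.finrank_eq_zero.1 hker)

theorem transpose_mul_self_mulVec_injective [Fintype m] [Field R] [LinearOrder R]
    [IsStrictOrderedRing R] (A : Matrix m n R) (h : A.rank = Fintype.card n) :
    Function.Injective (Aᵀ * A).mulVec :=
  mulVec_injective_of_rank_eq_card _ ((rank_transpose_mul_self A).trans h)

theorem transpose_mulVec_transpose_mulVec_eq_zero [Fintype m] [CommRing R] {A : Matrix n k R}
    {B : Matrix m n R} (h : B * A = 0) (w : m → R) : Aᵀ *ᵥ (Bᵀ *ᵥ w) = 0 := by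
  rw [mulVec_mulVec, ← transpose_mul, h, transpose_zero, zero_mulVec]

end Matrix

section ReducedBasis

variable {m n ι κ : Type*} [Fintype m] [Fintype n]

theorem mulVec_inr_eq_of_mass_constraint [Fintype ι] [Fintype κ] {R : Type*} [Field R]
    [LinearOrder R] [IsStrictOrderedRing R] {M : Matrix m n R} {Φhom : Matrix n ι R}
    {Φinhom : Matrix n κ R}
    (hdiv : M * Φhom = 0) (hrank : (M * Φinhom).rank = Fintype.card κ) {V : n → R} {y : m → R}
    (hV : ∃ c, V = Φinhom *ᵥ c) (hMV : M *ᵥ V = y) {v : ι ⊕ κ → R}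
    (hmass : ((M * Φinhom)ᵀ * M * Matrix.fromCols Φhom Φinhom) *ᵥ v = (M * Φinhom)ᵀ *ᵥ y) :
    Φinhom *ᵥ (v ∘ Sum.inr) = V := by
  obtain ⟨c, rfl⟩ := hV
  have hdiv_v : M *ᵥ (Matrix.fromCols Φhom Φinhom *ᵥ v) = (M * Φinhom) *ᵥ (v ∘ Sum.inr) := by
    rw [Matrix.fromCols_mulVec, Matrix.mulVec_add, Matrix.mulVec_mulVec, hdiv,
      Matrix.zero_mulVec, zero_add, Matrix.mulVec_mulVec]
  congr 1
  apply Matrix.transpose_mul_self_mulVec_injective _ hrank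
  rw [← Matrix.mulVec_mulVec, ← Matrix.mulVec_mulVec, hdiv_v, ← hMV] at hmass
  simpa only [Matrix.mulVec_mulVec, Matrix.mul_assoc] using hmass

theorem hasDerivAt_homogeneous_coeffs {M : Matrix m n ℝ} {Φhom : Matrix n ι ℝ}
    {Φinhom : Matrix n κ ℝ} (hdiv : M * Φhom = 0) {a : ℝ → ι ⊕ κ → ℝ} {f : n → ℝ} {p : m → ℝ}
    {t : ℝ} (ha : HasDerivAt a ((Matrix.fromCols Φhom Φinhom)ᵀ *ᵥ f -
      (Matrix.fromCols Φhom Φinhom)ᵀ *ᵥ (-Mᵀ *ᵥ p)) t) :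
    HasDerivAt (fun s => a s ∘ Sum.inl) (Φhomᵀ *ᵥ f) t := by
  refine hasDerivAt_pi.2 fun i => ?_
  have ha_i := hasDerivAt_pi.1 ha (Sum.inl i)
  rwa [Pi.sub_apply, Matrix.transpose_fromCols, Matrix.fromRows_mulVec, Matrix.fromRows_mulVec,
    Sum.elim_inl, Sum.elim_inl, Matrix.neg_mulVec, Matrix.mulVec_neg,
    Matrix.transpose_mulVec_transpose_mulVec_eq_zero hdiv, neg_zero, Pi.zero_apply,
    sub_zero] at ha_i

end ReducedBasis

theorem rom_equivalence_general
    {m n Rh Ri : ℕ} (M : Matrix (Fin m) (Fin n) ℝ)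
    (G : Matrix (Fin n) (Fin m) ℝ) (hG : G = -Mᵀ)
    (Φhom : Matrix (Fin n) (Fin Rh) ℝ)
    (hhomdiv : M * Φhom = 0)
    (Φinhom : Matrix (Fin n) (Fin Ri) ℝ)
    (hrank : (M * Φinhom).rank = Ri)
    (Φ : Matrix (Fin n) (Fin Rh ⊕ Fin Ri) ℝ)
    (hΦ : Φ = Matrix.fromCols Φhom Φinhom)
    (Ψ : Matrix (Fin m) (Fin Ri) ℝ) (hΨ : Ψ = M * Φinhom)
    (F : (Fin n → ℝ) → (Fin n → ℝ)) (hF : LocallyLipschitz F)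
    (ytil : ℝ → Fin m → ℝ)
    (Vtil : ℝ → Fin n → ℝ)
    (hVtil : ∀ t, (∃ c : Fin Ri → ℝ, Vtil t = Φinhom.mulVec c) ∧
      M.mulVec (Vtil t) = ytil t)
    -- velocity-pressure ROM solution
    (a : ℝ → (Fin Rh ⊕ Fin Ri) → ℝ) (b : ℝ → Fin Ri → ℝ)
    (ha : ∀ t, HasDerivAt a
      (Φᵀ.mulVec (F (Φ.mulVec (a t))) - Φᵀ.mulVec (G.mulVec (Ψ.mulVec (b t)))) t)
    (hmass : ∀ t, (Ψᵀ * M * Φ).mulVec (a t) = Ψᵀ.mulVec (ytil t))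
    -- velocity-only ROM solution
    (ahom : ℝ → Fin Rh → ℝ)
    (hahom : ∀ t, HasDerivAt ahom
      (Φhomᵀ.mulVec (F (Φhom.mulVec (ahom t) + Vtil t))) t)
    -- matching initial conditions
    (hinit1 : ∀ i, a 0 (Sum.inl i) = ahom 0 i) :
    ∀ t : ℝ, Φ.mulVec (a t) = Φhom.mulVec (ahom t) + Vtil t := by
  subst hG hΦ hΨ
  have hinhom : ∀ t, Φinhom *ᵥ (a t ∘ Sum.inr) = Vtil t := fun t =>
    mulVec_inr_eq_of_mass_constraint hhomdiv (hrank.trans (Fintype.card_fin Ri).symm)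
      (hVtil t).1 (hVtil t).2 (hmass t)
  have hVtil_cont : Continuous Vtil := by
    have ha_cont : Continuous a := continuous_iff_continuousAt.2 fun t => (ha t).continuousAt
    have ha_inhom_cont : Continuous fun t => a t ∘ Sum.inr :=
      continuous_pi fun i => (continuous_apply (Sum.inr i)).comp ha_cont
    simpa only [← funext hinhom] using continuous_const.matrix_mulVec ha_inhom_cont
  have ha_hom : ∀ t, HasDerivAt (fun s => a s ∘ Sum.inl)
      (Φhomᵀ *ᵥ F (Φhom *ᵥ (a t ∘ Sum.inl) + Vtil t)) t := fun t => by
    simpa only [Matrix.fromCols_mulVec, hinhom] using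
      hasDerivAt_homogeneous_coeffs hhomdiv (ha t)
  have hsame : (fun s => a s ∘ Sum.inl) = ahom :=
    ODE_solution_unique_univ_of_locallyLipschitzUniformInTime
      (hF.locallyLipschitzUniformInTime_comp (Matrix.lipschitzWith_mulVec Φhomᵀ)
        (Matrix.lipschitzWith_mulVec Φhom) hVtil_cont) ha_hom hahom (funext hinit1)
  intro t
  rw [Matrix.fromCols_mulVec, hinhom, congrFun hsame t]

/-- Equivalence of the velocity-only and the velocity-pressure ROM
(Theorem 1 of the paper, specialized to `Q = I`): with
`Φ = [Φ_hom Φ_inhom]`, `Ψ = M Φ_inhom`, the velocity-pressure ROM velocity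
`Φ a(t)` equals the velocity-only ROM velocity `Φ_hom a_hom(t) + Ṽ(t)`. -/
theorem rom_equivalence
    {m n Rh Ri : ℕ} (M : Matrix (Fin m) (Fin n) ℝ)
    (Ω : Matrix (Fin n) (Fin n) ℝ) (hΩ : Ω.PosDef)
    (G : Matrix (Fin n) (Fin m) ℝ) (hG : G = -Mᵀ)
    (Φhom : Matrix (Fin n) (Fin Rh) ℝ)
    (hhomortho : Φhomᵀ * Ω * Φhom = 1) (hhomdiv : M * Φhom = 0)
    (Φinhom : Matrix (Fin n) (Fin Ri) ℝ)
    (hinortho : Φinhomᵀ * Ω * Φinhom = 1)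
    (hperp : Φhomᵀ * Ω * Φinhom = 0)
    (hrank : (M * Φinhom).rank = Ri)
    (Φ : Matrix (Fin n) (Fin Rh ⊕ Fin Ri) ℝ)
    (hΦ : Φ = Matrix.fromCols Φhom Φinhom)
    (Ψ : Matrix (Fin m) (Fin Ri) ℝ) (hΨ : Ψ = M * Φinhom)
    (F : (Fin n → ℝ) → (Fin n → ℝ)) (hF : LocallyLipschitz F)
    (ytil : ℝ → Fin m → ℝ)
    (Vtil : ℝ → Fin n → ℝ)
    (hVtil : ∀ t, (∃ c : Fin Ri → ℝ, Vtil t = Φinhom.mulVec c) ∧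
      M.mulVec (Vtil t) = ytil t)
    -- velocity-pressure ROM solution
    (a : ℝ → (Fin Rh ⊕ Fin Ri) → ℝ) (b : ℝ → Fin Ri → ℝ)
    (ha : ∀ t, HasDerivAt a
      (Φᵀ.mulVec (F (Φ.mulVec (a t))) - Φᵀ.mulVec (G.mulVec (Ψ.mulVec (b t)))) t)
    (hmass : ∀ t, (Ψᵀ * M * Φ).mulVec (a t) = Ψᵀ.mulVec (ytil t))
    -- velocity-only ROM solution
    (ahom : ℝ → Fin Rh → ℝ)
    (hahom : ∀ t, HasDerivAt ahom
      (Φhomᵀ.mulVec (F (Φhom.mulVec (ahom t) + Vtil t))) t)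
    -- matching initial conditions
    (hinit1 : ∀ i, a 0 (Sum.inl i) = ahom 0 i)
    (hinit2 : Φinhom.mulVec (fun i => a 0 (Sum.inr i)) = Vtil 0) :
    ∀ t : ℝ, Φ.mulVec (a t) = Φhom.mulVec (ahom t) + Vtil t :=
  rom_equivalence_general M G hG Φhom hhomdiv Φinhom hrank Φ hΦ Ψ hΨ F hF ytil Vtil hVtil a b ha
    hmass ahom hahom hinit1
end
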